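/- Let u = (2√6 − 1)/23 (the positive root of 23u² + 2u − 1 = 0). There exist 20 unit vectors x_1, …, x_20 in EuclideanSpace ℝ (Fin 7) such that ⟨x_i, x_j⟩ ≤ u for all i ≠ j. -/

import Mathlib

/-!
Take two spherical codes `a`, `b` on the unit sphere of a hyperplane `e⊥`, each with pairwise inner
products `≤ 0`, and with `⟪a i, b j⟫ ≤ c`. Lifting `a` to height `√u` and `b` to height `-√u` on the
unit sphere gives inner products `(1 - u)⟪a i, a i'⟫ + u ≤ u` within a layer and
`(1 - u)⟪a i, b j⟫ - u ≤ u` across layers, as soon as `(1 - u) c ≤ 2u`.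
In `ℝ⁶` take for `a` the 12 vectors `±eₖ` and for `b` the 8 codewords of the binary `[6, 3, 3]` code
written as `±1` vectors and normalised by `1/√6`; then `c = 1/√6`, and `(1 - u)/√6 = 2u` is exactly
`u = 1/(1 + 2√6) = (2√6 - 1)/23`.
-/

open scoped InnerProductSpace Matrix

section TwoLayers

variable {F ι κ : Type*} [NormedAddCommGroup F] [InnerProductSpace ℝ F]

def IsSphericalCode (x : ι → F) (u : ℝ) : Prop :=
  (∀ i, ‖x i‖ = 1) ∧ Pairwise fun i j => ⟪x i, x j⟫_ℝ ≤ u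

lemma IsSphericalCode.comp_injective {x : ι → F} {u : ℝ} (hx : IsSphericalCode x u)
    {f : κ → ι} (hf : Function.Injective f) : IsSphericalCode (x ∘ f) u :=
  ⟨fun k => hx.1 (f k), fun _ _ hkl => hx.2 (hf.ne hkl)⟩

lemma inner_add_smul_add_smul_of_orthogonal {v w e : F} (hv : ⟪v, e⟫_ℝ = 0) (hw : ⟪w, e⟫_ℝ = 0)
    (he : ‖e‖ = 1) (s t : ℝ) : ⟪v + s • e, w + t • e⟫_ℝ = ⟪v, w⟫_ℝ + s * t := by
  have hew : ⟪e, w⟫_ℝ = 0 := by rw [real_inner_comm, hw]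
  simp only [inner_add_left, inner_add_right, real_inner_smul_left, real_inner_smul_right,
    real_inner_self_eq_norm_sq, hv, hew, he]
  ring

noncomputable def twoLayerLift (e : F) (u : ℝ) (a : ι → F) (b : κ → F) :
    ι ⊕ κ → F :=
  fun z => √(1 - u) • Sum.elim a b z + Sum.elim (fun _ => √u) (fun _ => -√u) z • e

lemma isSphericalCode_twoLayerLift {e : F} {a : ι → F} {b : κ → F} {c u : ℝ}
    (he : ‖e‖ = 1) (hae : ∀ i, ⟪a i, e⟫_ℝ = 0) (hbe : ∀ j, ⟪b j, e⟫_ℝ = 0)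
    (ha : IsSphericalCode a 0) (hb : IsSphericalCode b 0) (hab : ∀ i j, ⟪a i, b j⟫_ℝ ≤ c)
    (hu₀ : 0 ≤ u) (hu₁ : u ≤ 1) (hcu : (1 - u) * c ≤ 2 * u) :
    IsSphericalCode (twoLayerLift e u a b) u := by
  set y := Sum.elim a b
  set h : ι ⊕ κ → ℝ := Sum.elim (fun _ => √u) (fun _ => -√u)
  have hye : ∀ z, ⟪√(1 - u) • y z, e⟫_ℝ = 0 := by
    rintro (i | j) <;> simp [y, real_inner_smul_left, hae, hbe]
  have hinner : ∀ z w, ⟪twoLayerLift e u a b z, twoLayerLift e u a b w⟫_ℝ =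
      (1 - u) * ⟪y z, y w⟫_ℝ + h z * h w := by
    intro z w
    rw [twoLayerLift, twoLayerLift, inner_add_smul_add_smul_of_orthogonal (hye z) (hye w) he,
      real_inner_smul_left, real_inner_smul_right, ← mul_assoc, Real.mul_self_sqrt (by linarith)]
  have hu : √u * √u = u := Real.mul_self_sqrt hu₀
  constructor
  · intro z
    have hy : ‖y z‖ = 1 := by cases z <;> simp [y, ha.1, hb.1]
    have hh : h z * h z = u := by cases z <;> simp [h, hu]
    rw [norm_eq_sqrt_real_inner, hinner, real_inner_self_eq_norm_sq, hy, hh]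
    norm_num
  · intro z w hzw
    rw [hinner]
    rcases z with i | j <;> rcases w with i' | j'
    · have := ha.2 (mt (congrArg Sum.inl) hzw)
      simp only [y, h, Sum.elim_inl, hu]
      nlinarith
    · simp only [y, h, Sum.elim_inl, Sum.elim_inr, mul_neg, hu]
      nlinarith [hab i j']
    · simp only [y, h, Sum.elim_inl, Sum.elim_inr, neg_mul, hu, real_inner_comm]
      nlinarith [hab i' j]
    · have := hb.2 (mt (congrArg Sum.inr) hzw)
      simp only [y, h, Sum.elim_inr, neg_mul_neg, hu]
      nlinarith

end TwoLayers

section IntegerVectors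

variable {n : ℕ}

def intVec (v : Fin n → ℤ) : EuclideanSpace ℝ (Fin n) :=
  WithLp.toLp 2 fun k => (v k : ℝ)

lemma inner_intVec (v w : Fin n → ℤ) : ⟪intVec v, intVec w⟫_ℝ = ((v ⬝ᵥ w : ℤ) : ℝ) := by
  simp [intVec, EuclideanSpace.inner_toLp_toLp, dotProduct, mul_comm]

lemma norm_intVec (v : Fin n → ℤ) : ‖intVec v‖ = √((v ⬝ᵥ v : ℤ) : ℝ) := by
  rw [norm_eq_sqrt_real_inner, inner_intVec]

end IntegerVectors

def crossPolytope : Fin 12 → Fin 7 → ℤ :=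
  ![![1, 0, 0, 0, 0, 0, 0], ![0, 1, 0, 0, 0, 0, 0], ![0, 0, 1, 0, 0, 0, 0],
    ![0, 0, 0, 1, 0, 0, 0], ![0, 0, 0, 0, 1, 0, 0], ![0, 0, 0, 0, 0, 1, 0],
    ![-1, 0, 0, 0, 0, 0, 0], ![0, -1, 0, 0, 0, 0, 0], ![0, 0, -1, 0, 0, 0, 0],
    ![0, 0, 0, -1, 0, 0, 0], ![0, 0, 0, 0, -1, 0, 0], ![0, 0, 0, 0, 0, -1, 0]]

/-- The codewords of a binary `[6, 3, 3]` code as `±1` vectors: Hamming distance `≥ 3` between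
codewords means dot product `≤ 6 - 2 · 3 = 0`. -/
def signCode : Fin 8 → Fin 7 → ℤ :=
  ![![1, 1, 1, 1, 1, 1, 0], ![-1, 1, 1, -1, -1, 1, 0], ![1, -1, 1, -1, 1, -1, 0],
    ![1, 1, -1, 1, -1, -1, 0], ![-1, -1, 1, 1, -1, -1, 0], ![-1, 1, -1, -1, 1, -1, 0],
    ![1, -1, -1, -1, -1, 1, 0], ![-1, -1, -1, 1, 1, 1, 0]]

def lastCoordinate : Fin 7 → ℤ := ![0, 0, 0, 0, 0, 0, 1]

lemma norm_intVec_lastCoordinate : ‖intVec lastCoordinate‖ = 1 := by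
  have : lastCoordinate ⬝ᵥ lastCoordinate = 1 := by decide
  rw [norm_intVec, this, Int.cast_one, Real.sqrt_one]

lemma inner_crossPolytope_lastCoordinate (i : Fin 12) :
    ⟪intVec (crossPolytope i), intVec lastCoordinate⟫_ℝ = 0 := by
  have : crossPolytope i ⬝ᵥ lastCoordinate = 0 := by revert i; decide
  rw [inner_intVec, this, Int.cast_zero]

lemma inner_signCode_lastCoordinate (j : Fin 8) :
    ⟪(√6)⁻¹ • intVec (signCode j), intVec lastCoordinate⟫_ℝ = 0 := by
  have : signCode j ⬝ᵥ lastCoordinate = 0 := by revert j; decide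
  rw [real_inner_smul_left, inner_intVec, this, Int.cast_zero, mul_zero]

lemma isSphericalCode_crossPolytope : IsSphericalCode (fun i => intVec (crossPolytope i)) 0 := by
  refine ⟨fun i => ?_, fun i i' hii' => ?_⟩
  · have : crossPolytope i ⬝ᵥ crossPolytope i = 1 := by revert i; decide
    rw [norm_intVec, this, Int.cast_one, Real.sqrt_one]
  · have : ∀ i i' : Fin 12, i ≠ i' → crossPolytope i ⬝ᵥ crossPolytope i' ≤ 0 := by decide
    show ⟪intVec _, intVec _⟫_ℝ ≤ 0
    rw [inner_intVec]
    exact_mod_cast this i i' hii'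

lemma isSphericalCode_signCode :
    IsSphericalCode (fun j => (√6)⁻¹ • intVec (signCode j)) 0 := by
  refine ⟨fun j => ?_, fun j j' hjj' => ?_⟩
  · have : signCode j ⬝ᵥ signCode j = 6 := by revert j; decide
    rw [norm_smul, norm_intVec, this, norm_inv, Real.norm_of_nonneg (Real.sqrt_nonneg _)]
    exact inv_mul_cancel₀ (by positivity)
  · have : ∀ j j' : Fin 8, j ≠ j' → signCode j ⬝ᵥ signCode j' ≤ 0 := by decide
    have hdot : ((signCode j ⬝ᵥ signCode j' : ℤ) : ℝ) ≤ 0 := by exact_mod_cast this j j' hjj'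
    show ⟪(√6)⁻¹ • intVec _, (√6)⁻¹ • intVec _⟫_ℝ ≤ 0
    rw [real_inner_smul_left, real_inner_smul_right, inner_intVec, ← mul_assoc]
    exact mul_nonpos_of_nonneg_of_nonpos (by positivity) hdot

lemma inner_crossPolytope_signCode_le (i : Fin 12) (j : Fin 8) :
    ⟪intVec (crossPolytope i), (√6)⁻¹ • intVec (signCode j)⟫_ℝ ≤ (√6)⁻¹ := by
  have : crossPolytope i ⬝ᵥ signCode j ≤ 1 := by revert i j; decide
  rw [real_inner_smul_right, inner_intVec]
  exact mul_le_of_le_one_right (by positivity) (by exact_mod_cast this)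

lemma one_sub_mul_inv_sqrt_six :
    (1 - (2 * √6 - 1) / 23) * (√6)⁻¹ = 2 * ((2 * √6 - 1) / 23) := by
  have h6 : √6 ^ 2 = 6 := Real.sq_sqrt (by norm_num)
  field_simp
  linear_combination -4 * h6

/-- Let `u = (2 * Real.sqrt 6 - 1) / 23` (the positive root of 23u² + 2u - 1 = 0). There exist 20 unit vectors in
`EuclideanSpace ℝ (Fin 7)` whose pairwise inner products are all at most `u`. -/
theorem exists_spherical_code_20_points_dim7 :
    ∀ u : ℝ, u = (2 * Real.sqrt 6 - 1) / 23 →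
      ∃ x : Fin 20 → EuclideanSpace ℝ (Fin 7),
        (∀ i, ‖x i‖ = 1) ∧ ∀ i j, i ≠ j → ⟪x i, x j⟫_ℝ ≤ u := by
  rintro u rfl
  have h6_lower : 2 < √6 := (Real.lt_sqrt (by norm_num)).mpr (by norm_num)
  have h6_upper : √6 < 3 := (Real.sqrt_lt' (by norm_num)).mpr (by norm_num)
  have hcode := isSphericalCode_twoLayerLift norm_intVec_lastCoordinate
    inner_crossPolytope_lastCoordinate inner_signCode_lastCoordinate
    isSphericalCode_crossPolytope isSphericalCode_signCode inner_crossPolytope_signCode_le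
    (by linarith) (by linarith) one_sub_mul_inv_sqrt_six.le
  obtain ⟨hnorm, hinner⟩ := hcode.comp_injective finSumFinEquiv.symm.injective
  exact ⟨_, hnorm, fun i j hij => hinner hij⟩
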